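/- arXiv:2010.09967 — 4 statements merged into one kernel-verified Lean document; each statement's English description precedes it below -/
import Mathlib

section
/- Let A be a unital ring and ħ ∈ ℂ. Let a = (a^{kl}), a' = (a'^{kl}), b = (b^{kl}), b' = (b'^{kl}) be 2×2 matrices with entries in A such that (i) every entry of a and a' commutes with every entry of b and b'; (ii) there exist central elements q_A, q_B of A with ε_{cd} a^{kc} a'^{ld} = q_A ε_{kl} and ε_{cd} b^{kc} b'^{ld} = q_B ε_{kl} for all k,l ∈ {1,2}. Then for all i,j ∈ {1,2}: Σ ε_{jν} ε_{αβ} a^{ia} (2 δ_{αk} δ_{νl} − δ_{αl} δ_{νk}) a'^{lb} b^{kk'} (δ_{k'a} δ_{bl'} − δ_{k'b} δ_{al'}) b'^{βl'} = 3 q_A q_B δ_{ij}, where the sum runs over all repeated indices a,b,k,l,k',l',ν,α,β ∈ {1,2}. -/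
/-- The antisymmetric ε-symbol valued in a ring. -/
def eps {A : Type*} [Ring A] (i j : Fin 2) : A :=
  if i = 0 ∧ j = 1 then 1 else if i = 1 ∧ j = 0 then -1 else 0

/-- The Kronecker delta valued in a ring. -/
def kd {A : Type*} [Ring A] (i j : Fin 2) : A := if i = j then 1 else 0

set_option maxHeartbeats 1600000 in
/-- The contraction identity yielding the residue formula
(2/3)·Res_{s=0} 𝔐^{ij}(u,s) = qdet T₊(u) · qdet T₋(u) · δ_{ij}. -/
theorem residue_contraction_identity {A : Type*} [Ring A]
    (a a' b b' : Matrix (Fin 2) (Fin 2) A) (qA qB : A)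
    (hcomm : ∀ (i j k l : Fin 2),
      Commute (a i j) (b k l) ∧ Commute (a i j) (b' k l) ∧
      Commute (a' i j) (b k l) ∧ Commute (a' i j) (b' k l))
    (hqA_central : ∀ x : A, qA * x = x * qA)
    (hqB_central : ∀ x : A, qB * x = x * qB)
    (hA : ∀ k l : Fin 2, (∑ c, ∑ d, eps c d * (a k c * a' l d)) = qA * eps k l)
    (hB : ∀ k l : Fin 2, (∑ c, ∑ d, eps c d * (b k c * b' l d)) = qB * eps k l)
    (i j : Fin 2) :
    (∑ ν, ∑ α, ∑ β, ∑ x, ∑ y, ∑ k, ∑ l, ∑ k', ∑ l',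
        eps j ν * eps α β *
          (a i x * ((2 : A) * kd α k * kd ν l - kd α l * kd ν k) * a' l y *
            b k k' * (kd k' x * kd y l' - kd k' y * kd x l') * b' β l'))
      = 3 * qA * qB * kd i j := by
  have hP : ∀ k m : Fin 2, a k 0 * a' m 1 - a k 1 * a' m 0 = qA * eps k m := by
    intro k m
    have h := hA k m
    simpa [Fin.sum_univ_two, eps, sub_eq_add_neg] using h
  have hQ : ∀ k m : Fin 2, b k 0 * b' m 1 - b k 1 * b' m 0 = qB * eps k m := by
    intro k m
    have h := hB k m
    simpa [Fin.sum_univ_two, eps, sub_eq_add_neg] using h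
  fin_cases i <;> fin_cases j
  · -- i = 0, j = 0
    simp only [Fin.sum_univ_two]
    norm_num [eps, kd]
    trans (2*((a 0 0 * a' 1 1 - a 0 1 * a' 1 0) * (b 0 0 * b' 1 1 - b 0 1 * b' 1 0))
      - (a 0 0 * a' 1 1 - a 0 1 * a' 1 0) * (b 1 0 * b' 0 1 - b 1 1 * b' 0 0)
      - (a 0 0 * a' 0 1 - a 0 1 * a' 0 0) * (b 1 0 * b' 1 1 - b 1 1 * b' 1 0))
    · noncomm_ring
    · rw [hP, hP, hQ, hQ, hQ]
      simp [eps]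
      noncomm_ring
  · -- i = 0, j = 1
    simp only [Fin.sum_univ_two]
    norm_num [eps, kd]
    trans (-((a 0 0 * a' 0 1 - a 0 1 * a' 0 0) * (b 0 0 * b' 1 1 - b 0 1 * b' 1 0))
      + 2*((a 0 0 * a' 0 1 - a 0 1 * a' 0 0) * (b 1 0 * b' 0 1 - b 1 1 * b' 0 0))
      - (a 0 0 * a' 1 1 - a 0 1 * a' 1 0) * (b 0 0 * b' 0 1 - b 0 1 * b' 0 0))
    · noncomm_ring
    · rw [hP, hP, hQ, hQ, hQ]
      simp [eps]
  · -- i = 1, j = 0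
    simp only [Fin.sum_univ_two]
    norm_num [eps, kd]
    trans (2*((a 1 0 * a' 1 1 - a 1 1 * a' 1 0) * (b 0 0 * b' 1 1 - b 0 1 * b' 1 0))
      - (a 1 0 * a' 1 1 - a 1 1 * a' 1 0) * (b 1 0 * b' 0 1 - b 1 1 * b' 0 0)
      - (a 1 0 * a' 0 1 - a 1 1 * a' 0 0) * (b 1 0 * b' 1 1 - b 1 1 * b' 1 0))
    · noncomm_ring
    · rw [hP, hP, hQ, hQ, hQ]
      simp [eps]
  · -- i = 1, j = 1
    simp only [Fin.sum_univ_two]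
    norm_num [eps, kd]
    trans (-((a 1 0 * a' 0 1 - a 1 1 * a' 0 0) * (b 0 0 * b' 1 1 - b 0 1 * b' 1 0))
      + 2*((a 1 0 * a' 0 1 - a 1 1 * a' 0 0) * (b 1 0 * b' 0 1 - b 1 1 * b' 0 0))
      - (a 1 0 * a' 1 1 - a 1 1 * a' 1 0) * (b 0 0 * b' 0 1 - b 0 1 * b' 0 0))
    · noncomm_ring
    · rw [hP, hP, hQ, hQ, hQ]
      simp [eps]
      noncomm_ring
end

section
/- Let A be a unital complex star-algebra (with conjugate-linear antimultiplicative involution *), ħ ∈ ℝ, and let S, T₊, T₋, U : ℂ → Matrix (Fin 2) (Fin 2) A be matrix-valued functions such that: (i) (T₊^{ij}(u))* = T₋^{ij}(ū), (S^{ij}(u))* = S^{ij}(ū), and (U^{ij}(u))* = ε_{ia} ε_{jb} U^{ab}(ū) for all i,j,u; (ii) the entries of S, of T±, and of U mutually commute across the three families. Define Ǔ^{ij}(u) = ε_{ia} ε_{jb} U^{ba}(u), and set T̃₊(u) = S(u + iħ/2)·T₊(u)·Ǔ(−u + iħ/2) and T̃₋(u) = S(u − iħ/2)·T₋(u)·Uᵀ(−u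 − iħ/2). Then (T̃₊^{ij}(u))* = T̃₋^{ij}(ū) for all i,j ∈ {1,2} and u ∈ ℂ. -/
/-- The quantum comatrix Ǔ^{ij} = ε_{ia} ε_{jb} U^{ba}. -/
def comat {A : Type*} [Ring A] (M : Matrix (Fin 2) (Fin 2) A) :
    Matrix (Fin 2) (Fin 2) A :=
  fun i j => ∑ a, ∑ b, eps i a * eps j b * M b a

/-- The quantum Geroch transformation of the transition matrices is compatible
with Hermitian conjugation: (T̃₊^{ij}(u))* = T̃₋^{ij}(ū). -/
theorem geroch_hermitian_conjugation {A : Type*} [Ring A] [Algebra ℂ A]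
    [StarRing A] [StarModule ℂ A] (hbar : ℝ)
    (S Tp Tm U : ℂ → Matrix (Fin 2) (Fin 2) A)
    (hT : ∀ (i j : Fin 2) (u : ℂ), star (Tp u i j) = Tm ((starRingEnd ℂ) u) i j)
    (hS : ∀ (i j : Fin 2) (u : ℂ), star (S u i j) = S ((starRingEnd ℂ) u) i j)
    (hU : ∀ (i j : Fin 2) (u : ℂ),
      star (U u i j) = ∑ a, ∑ b, eps i a * eps j b * U ((starRingEnd ℂ) u) a b)
    (hST : ∀ (i j k l : Fin 2) (u v : ℂ),
      Commute (S u i j) (Tp v k l) ∧ Commute (S u i j) (Tm v k l))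
    (hSU : ∀ (i j k l : Fin 2) (u v : ℂ), Commute (S u i j) (U v k l))
    (hUT : ∀ (i j k l : Fin 2) (u v : ℂ),
      Commute (U u i j) (Tp v k l) ∧ Commute (U u i j) (Tm v k l))
    (i j : Fin 2) (u : ℂ) :
    star ((S (u + Complex.I * hbar / 2) * Tp u
            * comat (U (-u + Complex.I * hbar / 2))) i j)
      = (S ((starRingEnd ℂ) u - Complex.I * hbar / 2) * Tm ((starRingEnd ℂ) u)
            * (U (-(starRingEnd ℂ) u - Complex.I * hbar / 2)).transpose) i j := by
  have key : ∀ (a b c : A), Commute a b → Commute a c → Commute b c →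
      c * (b * a) = a * b * c := by
    intro a b c hab hac hbc
    rw [← mul_assoc, ← hbc.eq, mul_assoc, ← hac.eq, ← mul_assoc, ← hab.eq]
  have hconj1 : (starRingEnd ℂ) (u + Complex.I * hbar / 2)
      = (starRingEnd ℂ) u - Complex.I * hbar / 2 := by
    simp [map_add, map_div₀, map_mul, Complex.conj_I, Complex.conj_ofReal, map_ofNat]
    ring
  have hconj2 : (starRingEnd ℂ) (-u + Complex.I * hbar / 2)
      = -(starRingEnd ℂ) u - Complex.I * hbar / 2 := by
    simp [map_add, map_div₀, map_mul, Complex.conj_I, Complex.conj_ofReal, map_ofNat]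
    ring
  have hUc : ∀ (l j : Fin 2) (v : ℂ),
      star (comat (U v) l j) = U ((starRingEnd ℂ) v) j l := by
    intro l j v
    fin_cases l <;> fin_cases j <;>
      simp [comat, eps, Fin.sum_univ_two, hU]
  have hterm : ∀ (k x : Fin 2) (v : ℂ),
      U v j x * (Tm ((starRingEnd ℂ) u) k x
        * S ((starRingEnd ℂ) u - Complex.I * hbar / 2) i k)
      = S ((starRingEnd ℂ) u - Complex.I * hbar / 2) i k
        * Tm ((starRingEnd ℂ) u) k x * U v j x := by
    intro k x v
    exact key _ _ _ ((hST _ _ _ _ _ _).2) (hSU _ _ _ _ _ _)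
      ((hUT _ _ _ _ _ _).2).symm
  simp only [Matrix.mul_apply, Matrix.transpose_apply, Fin.sum_univ_two,
    star_add, star_mul, hUc, hT, hS, hconj1, hconj2, mul_add, add_mul, hterm]
end

section
/- Let A be a unital ℂ-algebra, ħ ∈ ℂ, and let S, T₊, T₋, U : ℂ → Matrix (Fin 2) (Fin 2) A be such that: (i) the entries of S, of T±, and of U mutually commute across the three families; (ii) defining Ǔ^{ij}(u) = ε_{ia} ε_{jb} U^{ba}(u), one has the comatrix identity Ǔ(z + iħ)·U(z) = I for all z ∈ ℂ (i.e. qdet U = 1). Set T̃₊(u) = S(u + iħ/2)·T₊(u)·Ǔ(−u + iħ/2), T̃₋(u) = S(u − iħ/2)·T₋(u)·Uᵀ(−u − iħ/2), M(u) = T₊(u)·T₋ᵀ(u), and M̃(u) = T̃₊(u)·T̃₋ᵀ(u). Then M̃(u) = S(u + iħ/2)·M(u)·Sᵀ(u − iħ/2) for all u ∈ ℂ. -/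
/-- Transpose of a product of matrices with mutually commuting entries. -/
lemma transpose_mul_comm {A : Type*} [Ring A] {n : Type*} [Fintype n]
    (M N : Matrix n n A) (h : ∀ i j k l, Commute (M i j) (N k l)) :
    (M * N).transpose = N.transpose * M.transpose := by
  ext i j
  simp only [Matrix.transpose_apply, Matrix.mul_apply]
  exact Finset.sum_congr rfl fun k _ => (h j k k i).eq

/-- The extended quantum Geroch transformation on the transition matrices induces
the Paternain–Perasa–Reisenberger transformation
M(u) ↦ S(u+iħ/2)·M(u)·Sᵀ(u−iħ/2) of the quantum monodromy matrix. -/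
theorem geroch_monodromy_transformation {A : Type*} [Ring A] [Algebra ℂ A] (hbar : ℂ)
    (S Tp Tm U : ℂ → Matrix (Fin 2) (Fin 2) A)
    (hST : ∀ (i j k l : Fin 2) (u v : ℂ),
      Commute (S u i j) (Tp v k l) ∧ Commute (S u i j) (Tm v k l))
    (hSU : ∀ (i j k l : Fin 2) (u v : ℂ), Commute (S u i j) (U v k l))
    (hUT : ∀ (i j k l : Fin 2) (u v : ℂ),
      Commute (U u i j) (Tp v k l) ∧ Commute (U u i j) (Tm v k l))
    (hUqdet : ∀ z : ℂ, comat (U (z + Complex.I * hbar)) * U z = 1)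
    (u : ℂ) :
    (S (u + Complex.I * hbar / 2) * Tp u * comat (U (-u + Complex.I * hbar / 2)))
        * (S (u - Complex.I * hbar / 2) * Tm u
            * (U (-u - Complex.I * hbar / 2)).transpose).transpose
      = S (u + Complex.I * hbar / 2) * (Tp u * (Tm u).transpose)
          * (S (u - Complex.I * hbar / 2)).transpose := by
  set up := u + Complex.I * hbar / 2
  set um := u - Complex.I * hbar / 2
  set vp := -u + Complex.I * hbar / 2
  set vm := -u - Complex.I * hbar / 2
  -- Step 1: transpose of the minus factor
  have hSTm : ∀ i j k l, Commute ((S um * Tm u) i j) ((U vm).transpose k l) := by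
    intro i j k l
    simp only [Matrix.mul_apply, Matrix.transpose_apply]
    exact Commute.sum_left _ _ _ fun x _ =>
      Commute.mul_left ((hSU i x l k um vm)) ((hUT l k x j vm u).2.symm)
  have htr : (S um * Tm u * (U vm).transpose).transpose
      = U vm * ((Tm u).transpose * (S um).transpose) := by
    rw [transpose_mul_comm _ _ hSTm, Matrix.transpose_transpose,
      transpose_mul_comm _ _ (fun i j k l => (hST i j k l um u).2)]
  rw [htr]
  -- Step 2: comat(U vp) * U vm = 1
  have hcan : comat (U vp) * U vm = 1 := by
    have := hUqdet vm
    have hz : vm + Complex.I * hbar = vp := by simp only [vm, vp]; ring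
    rwa [hz] at this
  calc S up * Tp u * comat (U vp) * (U vm * ((Tm u).transpose * (S um).transpose))
      = S up * Tp u * (comat (U vp) * U vm) * ((Tm u).transpose * (S um).transpose) := by
        noncomm_ring
    _ = S up * (Tp u * (Tm u).transpose) * (S um).transpose := by
        rw [hcan, mul_one]; noncomm_ring
end

section
/- Let A be a unital ring, ħ ∈ ℂ, and let a, a', b, b' be 2×2 matrices over A such that: (i) every entry of a and a' commutes with every entry of b and b'; (ii) b and b' satisfy the column relation ε_{cd} b^{kc} b'^{ld} = q_B ε_{kl} for all k,l ∈ {1,2}, for some q_B ∈ A commuting with all entries of b, b'. Define qdet over the pair (x,x') by qdet(x,x') = x^{11} x'^{22} − x^{12} x'^{21}. Then qdet(a·b, a'·b') = qdet(a,a') · q_B. In particular, if A, B : ℂ → Matrix (Fin 2)(Fin 2) A with cross-commuting entries and B satisfies ε_{cd} B^{kc}(u) B^{ld}(u+iħ) = qdet B(u) · ε_{kl}, then qdet(A·B)(u) = qdet A(u) · qdet B(u), where (A·B)(u) = A(u)·B(u). -/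
/-- The quantum determinant of a pair of matrices:
qdet(x,x') = x¹¹x'²² − x¹²x'²¹. -/
def qdet2 {A : Type*} [Ring A] (x x' : Matrix (Fin 2) (Fin 2) A) : A :=
  x 0 0 * x' 1 1 - x 0 1 * x' 1 0

/-- Core multiplicativity computation, needing only cross-commutation of the
`a`-entries with the `b`-entries and the ε-column relation for `b`. -/
theorem qdet2_mul_aux {A : Type*} [Ring A]
    (a a' b b' : Matrix (Fin 2) (Fin 2) A) (qB : A)
    (hc : ∀ i j k l : Fin 2,
      Commute (a i j) (b k l) ∧ Commute (a i j) (b' k l) ∧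
      Commute (a' i j) (b k l) ∧ Commute (a' i j) (b' k l))
    (hrel : ∀ k l : Fin 2, (∑ c, ∑ d, eps c d * (b k c * b' l d)) = qB * eps k l) :
    qdet2 (a * b) (a' * b') = qdet2 a a' * qB := by
  have h : ∀ c d : Fin 2, b c 0 * b' d 1 - b c 1 * b' d 0 = qB * eps c d := by
    intro c d
    have := hrel c d
    simp only [Fin.sum_univ_two, eps] at this
    norm_num [← sub_eq_add_neg] at this
    rw [this]
    simp [eps, mul_ite]
  have key : ∀ c d : Fin 2,
      a 0 c * b c 0 * (a' 1 d * b' d 1) - a 0 c * b c 1 * (a' 1 d * b' d 0)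
        = a 0 c * a' 1 d * (qB * eps c d) := by
    intro c d
    have h1 : b c 0 * (a' 1 d * b' d 1) = a' 1 d * (b c 0 * b' d 1) := by
      rw [← mul_assoc, ((hc 1 d c 0).2.2.1.symm).eq, mul_assoc]
    have h2 : b c 1 * (a' 1 d * b' d 0) = a' 1 d * (b c 1 * b' d 0) := by
      rw [← mul_assoc, ((hc 1 d c 1).2.2.1.symm).eq, mul_assoc]
    rw [mul_assoc (a 0 c) (b c 0), h1, mul_assoc (a 0 c) (b c 1), h2,
      ← mul_assoc (a 0 c) (a' 1 d), ← mul_assoc (a 0 c) (a' 1 d), ← mul_sub, h c d]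
  have expand : qdet2 (a * b) (a' * b')
      = ∑ c : Fin 2, ∑ d : Fin 2,
          (a 0 c * b c 0 * (a' 1 d * b' d 1) - a 0 c * b c 1 * (a' 1 d * b' d 0)) := by
    simp only [qdet2, Matrix.mul_apply, Finset.sum_mul_sum, ← Finset.sum_sub_distrib]
  rw [expand]
  simp only [key, Fin.sum_univ_two, eps]
  simp [qdet2, sub_mul, mul_assoc]
  abel

/-- Multiplicativity of the quantum determinant: qdet(a·b, a'·b') = qdet(a,a')·q_B,
and the corresponding statement for matrix-valued functions,
qdet(A·B)(u) = qdet A(u) · qdet B(u). -/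
theorem qdet_multiplicative {A : Type*} [Ring A] (hbar : ℂ) :
    (∀ (a a' b b' : Matrix (Fin 2) (Fin 2) A) (qB : A),
      (∀ i j k l : Fin 2,
        Commute (a i j) (b k l) ∧ Commute (a i j) (b' k l) ∧
        Commute (a' i j) (b k l) ∧ Commute (a' i j) (b' k l)) →
      (∀ x : A, qB * x = x * qB) →
      (∀ k l : Fin 2, (∑ c, ∑ d, eps c d * (b k c * b' l d)) = qB * eps k l) →
      qdet2 (a * b) (a' * b') = qdet2 a a' * qB) ∧
    (∀ (Am Bm : ℂ → Matrix (Fin 2) (Fin 2) A),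
      (∀ (i j k l : Fin 2) (u v : ℂ), Commute (Am u i j) (Bm v k l)) →
      (∀ (k l : Fin 2) (u : ℂ),
        (∑ c, ∑ d, eps c d * (Bm u k c * Bm (u + Complex.I * hbar) l d))
          = qdet2 (Bm u) (Bm (u + Complex.I * hbar)) * eps k l) →
      ∀ u : ℂ,
        qdet2 (Am u * Bm u) (Am (u + Complex.I * hbar) * Bm (u + Complex.I * hbar))
          = qdet2 (Am u) (Am (u + Complex.I * hbar))
              * qdet2 (Bm u) (Bm (u + Complex.I * hbar))) := by
  constructor
  · intro a a' b b' qB hc _ hrel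
    exact qdet2_mul_aux a a' b b' qB hc hrel
  · intro Am Bm hc hrel u
    exact qdet2_mul_aux (Am u) (Am (u + Complex.I * hbar)) (Bm u)
      (Bm (u + Complex.I * hbar)) _
      (fun i j k l => ⟨hc i j k l u u, hc i j k l u _, hc i j k l _ u, hc i j k l _ _⟩)
      (fun k l => hrel k l u)
end
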